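/- arXiv:1702.08483 — 3 statements merged into one kernel-verified Lean document; each statement's English description precedes it below -/
import Mathlib

section
/- Let k ≥ 1 and let S be a finite set of vectors v : (Fin k → Fin 2) → ℝ, each of whose entries sum to 1. Then there exists p with 0 < p ≤ 1 such that for every v ∈ S and every outcome x : Fin k → Fin 2, the entry (D_p^{⊗k}·v)(x) lies in the interval [0,1], where D_p^{⊗k} is the k-fold Kronecker power of the depolarizing matrix D_p. (For any finite collection of allowed affine preparations there is a nonzero depolarizing parameter whose noisy measurements assign well-defined probabilities to all of them: existence of a veil of propriety.) -/
/-- The depolarizing matrix `D_p`, with diagonal entries `(1+p)/2` and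
off-diagonal entries `(1-p)/2`. -/
noncomputable def depolarizing (p : ℝ) : Matrix (Fin 2) (Fin 2) ℝ :=
  fun i j => if i = j then (1 + p) / 2 else (1 - p) / 2

/-- The `k`-fold Kronecker power of `D_p`, indexed by functions
`Fin k → Fin 2`. -/
noncomputable def depolarizingPow (p : ℝ) (k : ℕ) :
    Matrix (Fin k → Fin 2) (Fin k → Fin 2) ℝ :=
  fun x y => ∏ t : Fin k, depolarizing p (x t) (y t)

/-- Existence of a veil of propriety: for any finite set of affine states on
`k` wires there is a nonzero depolarizing parameter `p` whose noisy
measurements assign well-defined probabilities to all of them. -/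
theorem exists_veil_of_propriety (k : ℕ) (hk : 1 ≤ k)
    (S : Finset ((Fin k → Fin 2) → ℝ)) (hS : ∀ v ∈ S, ∑ y, v y = 1) :
    ∃ p : ℝ, 0 < p ∧ p ≤ 1 ∧
      ∀ v ∈ S, ∀ x, (depolarizingPow p k).mulVec v x ∈ Set.Icc (0 : ℝ) 1 := by
  classical
  set F : ((Fin k → Fin 2) → ℝ) → (Fin k → Fin 2) → ℝ → ℝ :=
    fun v x p => (depolarizingPow p k).mulVec v x with hF
  have hcont : ∀ v x, Continuous (F v x) := by
    intro v x
    simp only [hF, Matrix.mulVec, dotProduct, depolarizingPow, depolarizing]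
    apply continuous_finset_sum
    intro y _
    apply Continuous.mul _ continuous_const
    apply continuous_finset_prod
    intro t _
    split_ifs <;> fun_prop
  have hzero : ∀ v ∈ S, ∀ x, F v x 0 = (1 / 2 : ℝ) ^ k := by
    intro v hv x
    simp only [hF, Matrix.mulVec, dotProduct, depolarizingPow, depolarizing]
    have : ∀ y : Fin k → Fin 2,
        (∏ t : Fin k, if x t = y t then (1 + (0:ℝ)) / 2 else (1 - 0) / 2)
          = (1 / 2 : ℝ) ^ k := by
      intro y
      have h2 : ∀ t : Fin k, (if x t = y t then (1 + (0:ℝ)) / 2 else (1 - 0) / 2)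
          = (1/2 : ℝ) := fun t => by split_ifs <;> norm_num
      simp_rw [h2]
      simp
    simp_rw [this]
    rw [← Finset.mul_sum, hS v hv, mul_one]
  -- the set of good parameters is open and contains 0
  set U : Set ℝ := ⋂ vx : S × (Fin k → Fin 2),
    (F vx.1 vx.2) ⁻¹' Set.Ioo (0 : ℝ) 1 with hU
  have hopen : IsOpen U :=
    isOpen_iInter_of_finite fun vx => (isOpen_Ioo).preimage (hcont _ _)
  have h0U : (0 : ℝ) ∈ U := by
    rw [hU, Set.mem_iInter]
    rintro ⟨⟨v, hv⟩, x⟩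
    simp only [Set.mem_preimage]
    rw [hzero v hv x]
    constructor
    · positivity
    · exact pow_lt_one₀ (by norm_num) (by norm_num) (by omega)
  obtain ⟨ε, hε, hball⟩ := Metric.isOpen_iff.mp hopen 0 h0U
  refine ⟨min (ε / 2) 1, by positivity, min_le_right _ _, ?_⟩
  intro v hv x
  have hmem : min (ε / 2) 1 ∈ U := by
    apply hball
    rw [Metric.mem_ball, Real.dist_eq, sub_zero, abs_of_pos (by positivity)]
    calc min (ε / 2) 1 ≤ ε / 2 := min_le_left _ _
      _ < ε := by linarith
  have := Set.mem_iInter.mp hmem ⟨⟨v, hv⟩, x⟩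
  exact Set.Ioo_subset_Icc_self this
end

section
/- Let k ≥ 1, let L ∈ ℝ, and let v : (Fin k → Fin 2) → ℝ be a vector with ∑_y v(y) = 1 and ∑_y |v(y)| ≤ L. Then for every p with 0 ≤ p ≤ 1 and (1+p)^k ≤ 1 + 1/L, every entry of D_p^{⊗k}·v lies in [0, 2^{1−k}], and hence in [0,1]. (A quantitative veil of propriety: a depolarizing parameter small compared to the inverse ℓ¹-norm of the state washes out all negative and super-normalised weights.) -/
lemma aux_two_le_pow_add_pow (p : ℝ) (h0 : 0 ≤ p) (h1 : p ≤ 1) :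
    ∀ k : ℕ, 2 ≤ (1 + p) ^ k + (1 - p) ^ k := by
  intro k
  induction k with
  | zero => norm_num
  | succ n ih =>
    have h1p : (0:ℝ) ≤ 1 - p := by linarith
    have h2 : (1 - p) ^ n ≤ (1 + p) ^ n := pow_le_pow_left₀ h1p (by linarith) n
    have h3 : (0:ℝ) ≤ (1 - p) ^ n := pow_nonneg h1p n
    rw [pow_succ, pow_succ]
    nlinarith

/-- Quantitative veil of propriety: if the state `v` sums to `1` with
ℓ¹-norm at most `L`, and `0 ≤ p ≤ 1` with `(1+p)^k ≤ 1 + 1/L`, then every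
entry of `D_p^{⊗k} · v` lies in `[0, 2^{1-k}]`, and hence in `[0,1]`. -/
theorem depolarizingPow_quantitative_veil (k : ℕ) (hk : 1 ≤ k) (L : ℝ)
    (v : (Fin k → Fin 2) → ℝ) (hv : ∑ y, v y = 1) (hL : ∑ y, |v y| ≤ L)
    (p : ℝ) (hp₀ : 0 ≤ p) (hp₁ : p ≤ 1) (hpk : (1 + p) ^ k ≤ 1 + 1 / L) :
    ∀ x, (depolarizingPow p k).mulVec v x ∈
        Set.Icc (0 : ℝ) ((2 : ℝ) ^ ((1 : ℤ) - (k : ℤ))) ∧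
      (depolarizingPow p k).mulVec v x ∈ Set.Icc (0 : ℝ) 1 := by
  intro x
  set c : ℝ := ((1:ℝ)/2) ^ k with hc
  have hcpos : 0 < c := by positivity
  have hL1 : (1:ℝ) ≤ L := by
    calc (1:ℝ) = |∑ y, v y| := by rw [hv]; norm_num
    _ ≤ ∑ y, |v y| := Finset.abs_sum_le_sum_abs _ _
    _ ≤ L := hL
  have hLpos : 0 < L := by linarith
  have hone_le : (1:ℝ) ≤ (1 + p) ^ k := one_le_pow₀ (by linarith)
  -- entrywise bounds
  have hentry : ∀ y, |depolarizingPow p k x y - c| ≤ c * ((1 + p) ^ k - 1) := by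
    intro y
    have hub : depolarizingPow p k x y ≤ ((1 + p) / 2) ^ k := by
      unfold depolarizingPow
      calc ∏ t : Fin k, depolarizing p (x t) (y t)
          ≤ ∏ _t : Fin k, (1 + p) / 2 := by
            apply Finset.prod_le_prod
            · intro t _; unfold depolarizing; split <;> linarith
            · intro t _; unfold depolarizing; split <;> linarith
        _ = ((1 + p) / 2) ^ k := by rw [Finset.prod_const]; simp
    have hlb : ((1 - p) / 2) ^ k ≤ depolarizingPow p k x y := by
      unfold depolarizingPow
      calc ((1 - p) / 2) ^ k = ∏ _t : Fin k, (1 - p) / 2 := by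
            rw [Finset.prod_const]; simp
        _ ≤ ∏ t : Fin k, depolarizing p (x t) (y t) := by
            apply Finset.prod_le_prod
            · intro t _; linarith
            · intro t _; unfold depolarizing; split <;> linarith
    have key : 2 ≤ (1 + p) ^ k + (1 - p) ^ k := aux_two_le_pow_add_pow p hp₀ hp₁ k
    have h1 : ((1 + p) / 2) ^ k = c * (1 + p) ^ k := by
      rw [hc, div_pow, div_pow, one_pow]; ring
    have h2 : ((1 - p) / 2) ^ k = c * (1 - p) ^ k := by
      rw [hc, div_pow, div_pow, one_pow]; ring
    rw [abs_le]
    constructor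
    · nlinarith
    · nlinarith
  -- row sums are 1
  have hrowinner : ∀ i : Fin 2, ∑ j : Fin 2, depolarizing p i j = 1 := by
    intro i
    fin_cases i <;> simp [depolarizing, Fin.sum_univ_two] <;> ring
  have hrow : ∑ y, depolarizingPow p k x y = 1 := by
    unfold depolarizingPow
    rw [← Fintype.piFinset_univ, ← Finset.prod_univ_sum]
    simp [hrowinner]
  -- decomposition
  have hdecomp : (depolarizingPow p k).mulVec v x
      = c + ∑ y, (depolarizingPow p k x y - c) * v y := by
    have h1 : ∑ y, (depolarizingPow p k x y - c) * v y
        = ∑ y, depolarizingPow p k x y * v y - c := by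
      simp [sub_mul, Finset.sum_sub_distrib, ← Finset.mul_sum, hv]
    simp [Matrix.mulVec, dotProduct, h1]
  have habs : |∑ y, (depolarizingPow p k x y - c) * v y| ≤ c := by
    have hfac : 0 ≤ c * ((1 + p) ^ k - 1) := by nlinarith
    calc |∑ y, (depolarizingPow p k x y - c) * v y|
        ≤ ∑ y, |(depolarizingPow p k x y - c) * v y| :=
          Finset.abs_sum_le_sum_abs _ _
      _ ≤ ∑ y, c * ((1 + p) ^ k - 1) * |v y| := by
          apply Finset.sum_le_sum
          intro y _
          rw [abs_mul]
          exact mul_le_mul_of_nonneg_right (hentry y) (abs_nonneg _)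
      _ = c * ((1 + p) ^ k - 1) * ∑ y, |v y| := by rw [← Finset.mul_sum]
      _ ≤ c * ((1 + p) ^ k - 1) * L :=
          mul_le_mul_of_nonneg_left hL hfac
      _ ≤ c := by
          have : (1 + p) ^ k - 1 ≤ 1 / L := by linarith
          have h2 : c * ((1 + p) ^ k - 1) * L ≤ c * (1 / L) * L := by
            apply mul_le_mul_of_nonneg_right _ hLpos.le
            exact mul_le_mul_of_nonneg_left this hcpos.le
          calc c * ((1 + p) ^ k - 1) * L ≤ c * (1 / L) * L := h2
            _ = c := by field_simp
  have habs' := abs_le.mp habs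
  have h2c : (2:ℝ) ^ ((1 : ℤ) - (k : ℤ)) = 2 * c := by
    rw [hc, zpow_sub₀ (two_ne_zero), zpow_one, zpow_natCast, div_pow, one_pow]
    field_simp
  have hck : 2 * c ≤ 1 := by
    have : c ≤ (1:ℝ)/2 := by
      calc c = ((1:ℝ)/2) ^ k := hc
        _ ≤ ((1:ℝ)/2) ^ 1 := pow_le_pow_of_le_one (by norm_num) (by norm_num) hk
        _ = 1/2 := pow_one _
    linarith
  refine ⟨⟨by rw [hdecomp]; linarith [habs'.1], ?_⟩, ⟨?_, ?_⟩⟩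
  · rw [hdecomp, h2c]; linarith [habs'.2]
  · rw [hdecomp]; linarith [habs'.1]
  · rw [hdecomp]; linarith [habs'.2, hck]
end

section
/- Let N ≥ 1, T, m be natural numbers, let U : List (Fin N) → Fin N → ℤ be history-dependent integer transition numerators, and for each branch β : Fin T → Fin N define the recorded weight Ω(β) = ∏_{t : Fin T} U((β(0),…,β(t−1)), β(t)), where the first argument of U is the length-t prefix of β. Suppose |Ω(β)| ≤ 2^m for all branches β, and let Acc be an arbitrary set of branches (the accepting ones). For a ∈ {0,1} define Ω'(β, a) = −Ω(β) if a = 1 and β ∉ Acc, and Ω'(β, a) = Ω(β) otherwise; and for b ∈ {0,1} and 0 ≤ C < 2^m define the sign χ(β, a, b, C) = +1 if C ≥ |Ω'(β,a)| and b = 1, −1 if C ≥ |Ω'(β,a)| and b = 0, and sign(Ω'(β,a)) if C < |Ω'(β,a)|. Then ∑_{β} ∑_{a ∈ {0,1}} ∑_{b ∈ {0,1}} ∑_{C = 0}^{2^m − 1} χ(β, a, b, C) = 4·∑_{β ∈ Acc} Ω(β). (The gap of the nondeterministic machine simulating an affine Turing machine equals 4·M^T times the machine's acceptance weight, where M is the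 common denominator of the transition weights.) -/
lemma key_sum (n : ℕ) (x : ℤ) (hx : |x| ≤ n) :
    ∑ b : Fin 2, ∑ C ∈ Finset.range n,
      (if |x| ≤ (C : ℤ) then (if b = 1 then (1 : ℤ) else -1) else Int.sign x)
      = 2 * x := by
  rw [Fin.sum_univ_two, ← Finset.sum_add_distrib]
  have h1 : ∀ C ∈ Finset.range n,
      ((if |x| ≤ (C : ℤ) then (if (0 : Fin 2) = 1 then (1 : ℤ) else -1) else Int.sign x)
        + (if |x| ≤ (C : ℤ) then (if (1 : Fin 2) = 1 then (1 : ℤ) else -1) else Int.sign x))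
      = if C < x.natAbs then 2 * Int.sign x else 0 := by
    intro C _
    have : |x| ≤ (C : ℤ) ↔ ¬ C < x.natAbs := by
      rw [Int.abs_eq_natAbs]; omega
    by_cases h : C < x.natAbs <;> simp [this, h, two_mul]
  rw [Finset.sum_congr rfl h1]
  have h2 : ∑ C ∈ Finset.range n, (if C < x.natAbs then 2 * Int.sign x else 0)
      = ∑ C ∈ Finset.range x.natAbs, 2 * Int.sign x := by
    rw [← Finset.sum_filter]
    congr 1
    ext C
    simp only [Finset.mem_filter, Finset.mem_range]
    constructor
    · rintro ⟨_, h⟩; exact h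
    · intro h
      refine ⟨lt_of_lt_of_le h ?_, h⟩
      rw [Int.abs_eq_natAbs] at hx; exact_mod_cast hx
  rw [h2, Finset.sum_const, Finset.card_range, nsmul_eq_mul, mul_comm, mul_assoc]
  congr 1
  rw [show ((x.natAbs : ℤ)) = |x| from (Int.abs_eq_natAbs x).symm, Int.sign_mul_abs]


/-- The length-`t` prefix of a branch `β`, as a list of choices. -/
def branchPrefix {N T : ℕ} (β : Fin T → Fin N) (t : Fin T) : List (Fin N) :=
  List.ofFn fun s : Fin t.val => β (Fin.castLE t.2.le s)

/-- The gap of the nondeterministic machine simulating an affine Turing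
machine equals `4` times the total recorded weight of the accepting
branches. -/
theorem gap_eq_four_mul_acceptance (N T m : ℕ) (hN : 1 ≤ N)
    (U : List (Fin N) → Fin N → ℤ)
    (Ω : (Fin T → Fin N) → ℤ)
    (hΩdef : ∀ β, Ω β = ∏ t : Fin T, U (branchPrefix β t) (β t))
    (hΩ : ∀ β, |Ω β| ≤ 2 ^ m)
    (Acc : Finset (Fin T → Fin N))
    (Ω' : (Fin T → Fin N) → Fin 2 → ℤ)
    (hΩ' : ∀ β a, Ω' β a = if a = 1 ∧ β ∉ Acc then -Ω β else Ω β) :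
    (∑ β : Fin T → Fin N, ∑ a : Fin 2, ∑ b : Fin 2,
        ∑ C ∈ Finset.range (2 ^ m),
          (if |Ω' β a| ≤ (C : ℤ) then (if b = 1 then (1 : ℤ) else -1)
            else Int.sign (Ω' β a))) = 4 * ∑ β ∈ Acc, Ω β := by
  have habs : ∀ β a, |Ω' β a| = |Ω β| := by
    intro β a; rw [hΩ']; split <;> simp [abs_neg]
  have hstep : ∀ β : Fin T → Fin N,
      (∑ a : Fin 2, ∑ b : Fin 2, ∑ C ∈ Finset.range (2 ^ m),
        (if |Ω' β a| ≤ (C : ℤ) then (if b = 1 then (1 : ℤ) else -1)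
          else Int.sign (Ω' β a)))
      = if β ∈ Acc then 4 * Ω β else 0 := by
    intro β
    have h1 : ∀ a : Fin 2,
        (∑ b : Fin 2, ∑ C ∈ Finset.range (2 ^ m),
          (if |Ω' β a| ≤ (C : ℤ) then (if b = 1 then (1 : ℤ) else -1)
            else Int.sign (Ω' β a))) = 2 * Ω' β a := by
      intro a
      exact key_sum (2 ^ m) (Ω' β a) (by rw [habs]; exact_mod_cast hΩ β)
    rw [Fin.sum_univ_two, h1, h1, hΩ', hΩ']
    by_cases h : β ∈ Acc <;> simp [h] <;> ring
  rw [Finset.sum_congr rfl fun β _ => hstep β, Finset.sum_ite_mem,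
    Finset.univ_inter, Finset.mul_sum]
end
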